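/- arXiv:2307.07675 — 3 statements merged into one kernel-verified Lean document; each statement's English description precedes it below -/
import Mathlib

section
/- Let A (agents) and H (experts) be finite nonempty sets, let Π : A × H → ℝ, let b : A → ℝ be a bid profile, let a ∈ A, and let Δ > 0. Suppose h₁ ∈ H maximizes h ↦ ∑_{i ∈ A} b(i)·Π(i,h) over H, and h₂ ∈ H maximizes h ↦ ∑_{i ∈ A} b(i)·Π(i,h) + Δ·Π(a,h) over H (i.e., h₂ maximizes reported welfare after agent a raises her bid by Δ). Then Π(a,h₂) ≥ Π(a,h₁). -/
open Finset

/-- Monotonicity step in the proof that following the expert with highest reported welfare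
is truthful: if `h₁` maximizes reported welfare under bids `b` and `h₂` maximizes reported
welfare after agent `a` raises her bid by `Δ > 0`, then `Π(a,h₂) ≥ Π(a,h₁)`. -/
theorem reported_welfare_argmax_monotone
    {A H : Type*} [Fintype A] [Nonempty A] [Fintype H] [Nonempty H]
    (Pi : A → H → ℝ) (b : A → ℝ) (a : A) (Δ : ℝ) (hΔ : 0 < Δ)
    (h₁ h₂ : H)
    (h1max : ∀ h : H, ∑ i, b i * Pi i h ≤ ∑ i, b i * Pi i h₁)
    (h2max : ∀ h : H, (∑ i, b i * Pi i h) + Δ * Pi a h ≤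
      (∑ i, b i * Pi i h₂) + Δ * Pi a h₂) :
    Pi a h₁ ≤ Pi a h₂ := by
  have h1 := h1max h₂
  have h2 := h2max h₁
  have : Δ * Pi a h₁ ≤ Δ * Pi a h₂ := by linarith
  exact le_of_mul_le_mul_left this hΔ
end

section
/- Let A (agents) and X (contexts) be finite nonempty sets, let p : X → ℝ with p(x) > 0 for all x and ∑_{x ∈ X} p(x) = 1, let ρ : A × X → ℝ be click-through rates, and let H be a finite nonempty set of experts h : X → A that is pre-ordered, meaning: for all h, h' ∈ H and all a ∈ A, either (for every x ∈ X, h'(x) = a implies h(x) = a) or (for every x ∈ X, h(x) = a implies h'(x) = a). Define Π(a,h) = ∑_{x ∈ X} p(x)·ρ(a,x)·𝟙{h(x) = a} and R(h,b) = ∑_{a ∈ A} b(a)·Π(a,h). Fix an agent a with ρ(a,x) > 0 for all x ∈ X, a bid profile b : A → ℝ, and Δ > 0. If h₁ maximizes R(·, b) over H and h₂ maximizes R(·, b + Δ·𝟙_a) over H (where (b + Δ·𝟙_a)(i) = b(i) + Δ·𝟙{i = a}), then for every x ∈ X, h₁(x) = a implies h₂(x) = a. -/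
open Finset

/-- With a pre-ordered expert class, raising an agent's bid can only (pointwise in every
context) increase the set of contexts on which the reported-welfare-maximizing expert
allocates to that agent. -/
theorem preordered_greedy_pointwise_monotone
    {A X : Type*} [Fintype A] [Nonempty A] [Fintype X] [Nonempty X] [DecidableEq A]
    (p : X → ℝ) (hp : ∀ x, 0 < p x) (hpsum : ∑ x, p x = 1)
    (ρ : A → X → ℝ)
    (H : Finset (X → A)) (hH : H.Nonempty)
    (pre : ∀ h ∈ H, ∀ h' ∈ H, ∀ a : A,
      (∀ x, h' x = a → h x = a) ∨ (∀ x, h x = a → h' x = a))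
    (a : A) (hρa : ∀ x, 0 < ρ a x)
    (b : A → ℝ) (Δ : ℝ) (hΔ : 0 < Δ)
    (Pi : A → (X → A) → ℝ)
    (hPi : ∀ i h, Pi i h = ∑ x, p x * ρ i x * (if h x = i then 1 else 0))
    (R : (X → A) → (A → ℝ) → ℝ)
    (hR : ∀ h b', R h b' = ∑ i, b' i * Pi i h)
    (h₁ h₂ : X → A) (h₁H : h₁ ∈ H) (h₂H : h₂ ∈ H)
    (h1max : ∀ h ∈ H, R h b ≤ R h₁ b)
    (h2max : ∀ h ∈ H, R h (fun i => b i + if i = a then Δ else 0) ≤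
      R h₂ (fun i => b i + if i = a then Δ else 0)) :
    ∀ x, h₁ x = a → h₂ x = a := by
  rcases pre h₁ h₁H h₂ h₂H a with hc | hc
  swap
  · exact hc
  -- hc : ∀ x, h₂ x = a → h₁ x = a
  -- Pi a h₂ ≤ Pi a h₁ pointwise-termwise
  have hterm : ∀ x : X, p x * ρ a x * (if h₂ x = a then 1 else 0) ≤
      p x * ρ a x * (if h₁ x = a then 1 else 0) := by
    intro x
    by_cases hx : h₂ x = a
    · simp [hx, hc x hx]
    · have : (0:ℝ) ≤ p x * ρ a x * (if h₁ x = a then 1 else 0) := by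
        apply mul_nonneg (le_of_lt (mul_pos (hp x) (hρa x)))
        split <;> norm_num
      simpa [hx] using this
  -- R with raised bid
  have hRdecomp : ∀ h : X → A,
      R h (fun i => b i + if i = a then Δ else 0) = R h b + Δ * Pi a h := by
    intro h
    rw [hR, hR]
    have : ∀ i : A, (b i + if i = a then Δ else 0) * Pi i h =
        b i * Pi i h + (if i = a then Δ * Pi i h else 0) := by
      intro i; by_cases hi : i = a <;> simp [hi] <;> ring
    rw [Finset.sum_congr rfl fun i _ => this i, Finset.sum_add_distrib,
      Finset.sum_ite_eq' Finset.univ a (fun i => Δ * Pi i h)]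
    simp
  have h1 : R h₂ b ≤ R h₁ b := h1max h₂ h₂H
  have h2 := h2max h₁ h₁H
  rw [hRdecomp h₁, hRdecomp h₂] at h2
  have hPile : Pi a h₁ ≤ Pi a h₂ := by nlinarith
  have hPige : Pi a h₂ ≤ Pi a h₁ := by
    rw [hPi, hPi]; exact Finset.sum_le_sum fun x _ => hterm x
  have heq : Pi a h₂ = Pi a h₁ := le_antisymm hPige hPile
  rw [hPi, hPi] at heq
  have hpt := (Finset.sum_eq_sum_iff_of_le (fun x _ => hterm x)).mp heq
  intro x hx
  have := hpt x (Finset.mem_univ x)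
  by_contra hne
  have hpos : 0 < p x * ρ a x := mul_pos (hp x) (hρa x)
  simp [hx, hne] at this
  rcases this with h | h
  exacts [absurd h (hp x).ne', absurd h (hρa x).ne']
end

section
/- There exist finite nonempty sets A (agents) and X (contexts), a probability function p : X → ℝ with p(x) > 0 for all x and ∑_x p(x) = 1, click-through rates ρ : A × X → [0,1], a finite set H of experts h : X → A, an agent a ∈ A, bids b₋ : A → [0,1] for the other agents, two bids β₁ < β₂ in [0,1] for agent a, and a context x̄ ∈ X with ρ(a, x̄) > 0, such that: letting b₁ and b₂ be the bid profiles agreeing with b₋ off a and assigning agent a the bids β₁ and β₂ respectively, and letting Π(a,h) = ∑_{x} p(x)·ρ(a,x)·𝟙{h(x)=a} and R(h,b) = ∑_{i ∈ A} b(i)·Π(i,h), the expert h₁ uniquely maximizing R(·, b₁) over H satisfies h₁(x̄) = a, while the expert h₂ uniquely maximizing R(·, b₂) over H satisfies h₂(x̄) ≠ a. -/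
open Finset

/-- Click probability of agent `i` induced by expert `h`. -/
noncomputable def clickProb {A X : Type*} [Fintype X] [DecidableEq A]
    (p : X → ℝ) (ρ : A → X → ℝ) (i : A) (h : X → A) : ℝ :=
  ∑ x, p x * ρ i x * (if h x = i then 1 else 0)

/-- Reported welfare of expert `h` under bid profile `b`. -/
noncomputable def reportedWelfare {A X : Type*} [Fintype A] [Fintype X] [DecidableEq A]
    (p : X → ℝ) (ρ : A → X → ℝ) (b : A → ℝ) (h : X → A) : ℝ :=
  ∑ i, b i * clickProb p ρ i h

/-- Counterexample: when agents observe the realized context, the greedy rule following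
the expert with highest reported welfare is not monotone in an agent's own bid at some
context `x̄`: there is an instance where agent `a` is allocated at `x̄` under the lower
bid `β₁` but not under the higher bid `β₂`. -/
theorem greedy_not_context_monotone :
    ∃ (nA nX : ℕ), 0 < nA ∧ 0 < nX ∧
    ∃ (p : Fin nX → ℝ) (ρ : Fin nA → Fin nX → ℝ)
      (H : Finset (Fin nX → Fin nA)) (a : Fin nA)
      (bminus : Fin nA → ℝ) (β₁ β₂ : ℝ) (xbar : Fin nX),
      (∀ x, 0 < p x) ∧ (∑ x, p x = 1) ∧
      (∀ i x, ρ i x ∈ Set.Icc (0:ℝ) 1) ∧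
      (∀ i, bminus i ∈ Set.Icc (0:ℝ) 1) ∧
      β₁ ∈ Set.Icc (0:ℝ) 1 ∧ β₂ ∈ Set.Icc (0:ℝ) 1 ∧ β₁ < β₂ ∧
      0 < ρ a xbar ∧
      ∃ h₁ ∈ H, ∃ h₂ ∈ H,
        (∀ h ∈ H, h ≠ h₁ →
          reportedWelfare p ρ (Function.update bminus a β₁) h <
            reportedWelfare p ρ (Function.update bminus a β₁) h₁) ∧
        (∀ h ∈ H, h ≠ h₂ →
          reportedWelfare p ρ (Function.update bminus a β₂) h <
            reportedWelfare p ρ (Function.update bminus a β₂) h₂) ∧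
        h₁ xbar = a ∧ h₂ xbar ≠ a := by
  refine ⟨2, 2, by norm_num, by norm_num,
    (fun _ => (1:ℝ)/2),
    ![![ (1:ℝ)/10, 1], ![0, 1]],
    {![0, 1], ![1, 0]}, 0, (fun _ => (1:ℝ)/10), 0, 1, 0,
    ?_, ?_, ?_, ?_, ?_, ?_, ?_, ?_,
    ![0,1], ?_, ![1,0], ?_, ?_, ?_, ?_, ?_⟩
  · intro x; norm_num
  · norm_num [Fin.sum_univ_two]
  · intro i x
    fin_cases i <;> fin_cases x <;> constructor <;> norm_num
  · intro i; constructor <;> norm_num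
  · constructor <;> norm_num
  · constructor <;> norm_num
  · norm_num
  · norm_num
  · simp
  · simp
  · intro h hH hne
    have : h = ![1,0] := by
      rcases Finset.mem_insert.1 hH with h1 | h2
      · exact absurd h1 hne
      · simpa using h2
    subst this
    simp [reportedWelfare, clickProb, Fin.sum_univ_two, Function.update]
  · intro h hH hne
    have : h = ![0,1] := by
      rcases Finset.mem_insert.1 hH with h1 | h2
      · exact h1
      · exact absurd (by simpa using h2) hne
    subst this
    simp [reportedWelfare, clickProb, Fin.sum_univ_two, Function.update]
    norm_num
  · simp
  · simp
end
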